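/- Let m,N≥1 be integers, α>1, L>0, K>0, B>0, ε>0, and let E⊆{x∈ℤ^m : |x|<N}. Let D:E→ℂ with |D(x)|≥1/B for all x∈E, and let S:E×E→ℂ with |S(x,x')| ≤ K e^{−αL|x−x'|_α} for all x,x'∈E. If ε·K·B·(2N)^m ≤ 1/2, then the matrix T defined by T(x,x)=D(x)−εS(x,x) on the diagonal and T(x,x')=−εS(x,x') off the diagonal is invertible, its inverse satisfies ‖T^{−1}‖ ≤ 2B in operator norm on ℓ²(E), and for all x≠x' in E, |T^{−1}(x,x')| ≤ 2εKB² e^{−αL|x−x'|_α}. -/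

import Mathlib

/-!
Write `diagonal D - ε • S = diagonal D * (1 - A)` with `A = diagonal D⁻¹ * ε • S`. The entries of
`A` are bounded by `c * w x y`, where `c = ε K B` and `w x y = exp (-α L |x - y|_α)`; subadditivity
of `|·|_α` makes the weight submultiplicative, `w x z * w z y ≤ w x y`, so the decay survives
matrix products: `‖(A ^ (k + 1)) x y‖ ≤ c (c #E) ^ k w x y`. Since `#E ≤ (2N) ^ m`, we have
`c #E ≤ 1 / 2`; this gives `‖A‖ ≤ 1 / 2` (bounding the operator norm by the Hilbert–Schmidt
norm), and summing the Neumann series `(1 - A)⁻¹ = ∑ A ^ k` term by term gives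
`‖(1 - A)⁻¹‖ ≤ 2` and, off the diagonal, where the term `A ^ 0 = 1` does not contribute,
`‖(1 - A)⁻¹ x y‖ ≤ 2 c w x y`. The inverse of `diagonal D - ε • S` is
`(1 - A)⁻¹ * diagonal D⁻¹`, and the entries of `D⁻¹` are at most `B`.
-/

open scoped BigOperators

noncomputable section

/-- `|x|_α = Σ_j |x_j|^{1/α}` for an integer vector. -/
def adist (α : ℝ) {m : ℕ} (x : Fin m → ℤ) : ℝ :=
  ∑ j, |(x j : ℝ)| ^ (1 / α)

/-- The ℓ² operator norm of a matrix indexed by a finite set `E ⊆ ℤ^m`. -/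
def opNorm {m : ℕ} {E : Finset (Fin m → ℤ)} (T : Matrix E E ℂ) : ℝ :=
  ‖Matrix.toEuclideanCLM (𝕜 := ℂ) T‖

open scoped Matrix.Norms.L2Operator

namespace Matrix

variable {ι 𝕜 : Type*} [Fintype ι] [DecidableEq ι] [RCLike 𝕜]

lemma l2_opNorm_le_sqrt_sum_norm_sq (M : Matrix ι ι 𝕜) :
    ‖M‖ ≤ √(∑ i, ∑ j, ‖M i j‖ ^ 2) := by
  rw [cstar_norm_def]
  refine (toEuclideanCLM (𝕜 := 𝕜) M).opNorm_le_bound (by positivity) fun x ↦ ?_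
  have hrow : ∀ i, ‖(toEuclideanCLM (𝕜 := 𝕜) M x) i‖ ^ 2 ≤ (∑ j, ‖M i j‖ ^ 2) * ‖x‖ ^ 2 := by
    intro i
    rw [EuclideanSpace.norm_sq_eq x]
    calc ‖(toEuclideanCLM (𝕜 := 𝕜) M x) i‖ ^ 2 ≤ (∑ j, ‖M i j‖ * ‖x j‖) ^ 2 := by
          gcongr
          simp only [ofLp_toEuclideanCLM, mulVec, dotProduct]
          exact (norm_sum_le _ _).trans_eq (by simp only [norm_mul])
      _ ≤ _ := Finset.sum_mul_sq_le_sq_mul_sq _ _ _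
  rw [← Real.sqrt_sq (norm_nonneg x), ← Real.sqrt_mul (by positivity), EuclideanSpace.norm_eq]
  gcongr
  calc _ ≤ ∑ i, (∑ j, ‖M i j‖ ^ 2) * ‖x‖ ^ 2 := Finset.sum_le_sum fun i _ ↦ hrow i
    _ = _ := (Finset.sum_mul ..).symm

lemma l2_opNorm_le_card_mul (M : Matrix ι ι 𝕜) {c : ℝ} (hc : 0 ≤ c) (h : ∀ i j, ‖M i j‖ ≤ c) :
    ‖M‖ ≤ Fintype.card ι * c := by
  refine (l2_opNorm_le_sqrt_sum_norm_sq M).trans ?_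
  calc √(∑ i, ∑ j, ‖M i j‖ ^ 2) ≤ √(∑ _i : ι, ∑ _j : ι, c ^ 2) := by
        gcongr with i _ j _
        exact h i j
    _ = Fintype.card ι * c := by
      simp only [Finset.sum_const, Finset.card_univ, nsmul_eq_mul]
      rw [← mul_assoc, ← sq, ← mul_pow, Real.sqrt_sq (by positivity)]

lemma l2_opNorm_le_half_of_norm_apply_le {A : Matrix ι ι 𝕜} {w : ι → ι → ℝ} {c : ℝ}
    (hc : 0 ≤ c) (hw₁ : ∀ x y, w x y ≤ 1) (hA : ∀ x y, ‖A x y‖ ≤ c * w x y)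
    (hsmall : c * Fintype.card ι ≤ 1 / 2) : ‖A‖ ≤ 1 / 2 := by
  have hAc : ∀ x y, ‖A x y‖ ≤ c := fun x y ↦
    (hA x y).trans (mul_le_of_le_one_right hc (hw₁ x y))
  linarith [l2_opNorm_le_card_mul A hc hAc]

lemma norm_pow_succ_apply_le {R : Type*} [NormedRing R] {A : Matrix ι ι R} {w : ι → ι → ℝ}
    {c : ℝ} (hc : 0 ≤ c) (hw : ∀ x y z, w x z * w z y ≤ w x y)
    (hA : ∀ x y, ‖A x y‖ ≤ c * w x y) (k : ℕ) (x y : ι) :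
    ‖(A ^ (k + 1)) x y‖ ≤ c * (c * Fintype.card ι) ^ k * w x y := by
  induction k generalizing y with
  | zero => simpa using hA x y
  | succ k ih =>
    rw [pow_succ, mul_apply]
    calc ‖∑ z, (A ^ (k + 1)) x z * A z y‖ ≤ ∑ z, ‖(A ^ (k + 1)) x z‖ * ‖A z y‖ :=
          (norm_sum_le _ _).trans (Finset.sum_le_sum fun z _ ↦ norm_mul_le _ _)
      _ ≤ ∑ _z : ι, c * (c * Fintype.card ι) ^ k * c * w x y := by
          refine Finset.sum_le_sum fun z _ ↦ ?_
          calc ‖(A ^ (k + 1)) x z‖ * ‖A z y‖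
              ≤ (c * (c * Fintype.card ι) ^ k * w x z) * (c * w z y) :=
                mul_le_mul (ih z) (hA z y) (norm_nonneg _) ((norm_nonneg _).trans (ih z))
            _ = c * (c * Fintype.card ι) ^ k * c * (w x z * w z y) := by ring
            _ ≤ c * (c * Fintype.card ι) ^ k * c * w x y := by gcongr; exact hw x y z
      _ = c * (c * Fintype.card ι) ^ (k + 1) * w x y := by
          rw [Finset.sum_const, Finset.card_univ, nsmul_eq_mul]; ring

lemma hasSum_geom_series_inv_one_sub {A : Matrix ι ι 𝕜} (hA : ‖A‖ < 1) :
    HasSum (fun k ↦ A ^ k) (1 - A)⁻¹ := by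
  rw [nonsing_inv_eq_ringInverse]
  exact hasSum_geom_series_inverse A hA

lemma l2_opNorm_one_le : ‖(1 : Matrix ι ι 𝕜)‖ ≤ 1 := by
  rw [cstar_norm_def, map_one]
  exact ContinuousLinearMap.norm_id_le

lemma l2_opNorm_inv_one_sub_le_two {A : Matrix ι ι 𝕜} (hA : ‖A‖ ≤ 1 / 2) : ‖(1 - A)⁻¹‖ ≤ 2 := by
  have hA1 : ‖A‖ < 1 := hA.trans_lt (by norm_num)
  rw [← (hasSum_geom_series_inv_one_sub hA1).tsum_eq]
  refine (tsum_geometric_le_of_norm_lt_one A hA1).trans ?_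
  have : (1 - ‖A‖)⁻¹ ≤ 2 := by
    rw [inv_le_comm₀ (by linarith) two_pos]; linarith
  linarith [l2_opNorm_one_le (ι := ι) (𝕜 := 𝕜)]

lemma norm_inv_one_sub_apply_le {A : Matrix ι ι 𝕜} {w : ι → ι → ℝ} {c : ℝ} (hc : 0 ≤ c)
    (hw₀ : ∀ x y, 0 ≤ w x y) (hw₁ : ∀ x y, w x y ≤ 1) (hw : ∀ x y z, w x z * w z y ≤ w x y)
    (hA : ∀ x y, ‖A x y‖ ≤ c * w x y) (hsmall : c * Fintype.card ι ≤ 1 / 2)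
    {x y : ι} (hxy : x ≠ y) :
    ‖(1 - A)⁻¹ x y‖ ≤ 2 * c * w x y := by
  have hA1 : ‖A‖ < 1 :=
    (l2_opNorm_le_half_of_norm_apply_le hc hw₁ hA hsmall).trans_lt (by norm_num)
  have hsum : HasSum (fun k ↦ (A ^ k) x y) ((1 - A)⁻¹ x y) :=
    (hasSum_geom_series_inv_one_sub hA1).map (entryLinearMap 𝕜 𝕜 x y) (by fun_prop)
  have hsum_succ : HasSum (fun k ↦ (A ^ (k + 1)) x y) ((1 - A)⁻¹ x y) := by
    simpa [one_apply_ne hxy] using (hasSum_nat_add_iff' 1).mpr hsum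
  have hgeom : HasSum (fun k : ℕ ↦ c * (1 / 2) ^ k * w x y) (c * 2 * w x y) :=
    (hasSum_geometric_two.mul_left c).mul_right (w x y)
  refine (hsum_succ.norm_le_of_bounded hgeom fun k ↦ ?_).trans_eq (by ring)
  refine (norm_pow_succ_apply_le hc hw hA k x y).trans ?_
  gcongr
  exact hw₀ x y

lemma diagonal_mul_diagonal_inv {D : ι → 𝕜} (hD : ∀ x, D x ≠ 0) :
    diagonal D * diagonal D⁻¹ = 1 := by
  rw [diagonal_mul_diagonal, ← diagonal_one]
  exact congrArg diagonal (funext fun x ↦ mul_inv_cancel₀ (hD x))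

lemma diagonal_sub_eq_diagonal_mul_one_sub {D : ι → 𝕜} (hD : ∀ x, D x ≠ 0) (P : Matrix ι ι 𝕜) :
    diagonal D - P = diagonal D * (1 - diagonal D⁻¹ * P) := by
  rw [mul_sub, mul_one, ← Matrix.mul_assoc, diagonal_mul_diagonal_inv hD, one_mul]

theorem isUnit_diagonal_sub_and_norm_inv_le {D : ι → 𝕜} {P : Matrix ι ι 𝕜} {w : ι → ι → ℝ} {B c : ℝ}
    (hB : 0 < B) (hc : 0 ≤ c) (hD : ∀ x, 1 / B ≤ ‖D x‖)
    (hw₀ : ∀ x y, 0 ≤ w x y) (hw₁ : ∀ x y, w x y ≤ 1) (hw : ∀ x y z, w x z * w z y ≤ w x y)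
    (hP : ∀ x y, ‖P x y‖ ≤ c * w x y) (hsmall : B * c * Fintype.card ι ≤ 1 / 2) :
    IsUnit (diagonal D - P) ∧ ‖(diagonal D - P)⁻¹‖ ≤ 2 * B ∧
      ∀ x y, x ≠ y → ‖(diagonal D - P)⁻¹ x y‖ ≤ 2 * B ^ 2 * c * w x y := by
  have hD₀ : ∀ x, D x ≠ 0 := fun x h ↦ by
    have := hD x; rw [h, norm_zero] at this; linarith [one_div_pos.mpr hB]
  have hDinv : ∀ x, ‖D⁻¹ x‖ ≤ B := fun x ↦ by
    rw [Pi.inv_apply, norm_inv]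
    exact inv_le_of_inv_le₀ (by positivity) (by simpa using hD x)
  have hA : ∀ x y, ‖(diagonal D⁻¹ * P) x y‖ ≤ B * c * w x y := fun x y ↦ by
    rw [diagonal_mul, norm_mul, mul_assoc]
    exact mul_le_mul (hDinv x) (hP x y) (norm_nonneg _) hB.le
  have hA_half := l2_opNorm_le_half_of_norm_apply_le (by positivity) hw₁ hA hsmall
  set A := diagonal D⁻¹ * P
  have hT := diagonal_sub_eq_diagonal_mul_one_sub hD₀ P
  have hTinv : (diagonal D - P)⁻¹ = (1 - A)⁻¹ * diagonal D⁻¹ := by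
    rw [hT, mul_inv_rev, inv_eq_right_inv (diagonal_mul_diagonal_inv hD₀)]
  refine ⟨?_, ?_, fun x y hxy ↦ ?_⟩
  · rw [hT]
    exact (isUnit_diagonal.mpr (Pi.isUnit_iff.mpr fun x ↦ (hD₀ x).isUnit)).mul
      (isUnit_one_sub_of_norm_lt_one (hA_half.trans_lt (by norm_num)))
  · rw [hTinv]
    refine (l2_opNorm_mul _ _).trans (mul_le_mul (l2_opNorm_inv_one_sub_le_two hA_half) ?_
      (norm_nonneg _) zero_le_two)
    rw [l2_opNorm_diagonal]
    exact (pi_norm_le_iff_of_nonneg hB.le).mpr hDinv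
  · rw [hTinv, mul_diagonal, norm_mul]
    calc ‖(1 - A)⁻¹ x y‖ * ‖D⁻¹ y‖ ≤ (2 * (B * c) * w x y) * B :=
          mul_le_mul (norm_inv_one_sub_apply_le (by positivity) hw₀ hw₁ hw hA hsmall hxy)
            (hDinv y) (norm_nonneg _) (by have := hw₀ x y; positivity)
      _ = 2 * B ^ 2 * c * w x y := by ring

end Matrix

lemma adist_nonneg (α : ℝ) {m : ℕ} (x : Fin m → ℤ) : 0 ≤ adist α x :=
  Finset.sum_nonneg fun _ _ ↦ Real.rpow_nonneg (abs_nonneg _) _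

lemma adist_add_le {α : ℝ} (hα : 1 ≤ α) {m : ℕ} (x y : Fin m → ℤ) :
    adist α (x + y) ≤ adist α x + adist α y := by
  rw [adist, adist, adist, ← Finset.sum_add_distrib]
  have hp : 1 / α ≤ 1 := (div_le_one (by linarith)).mpr hα
  refine Finset.sum_le_sum fun j _ ↦ ?_
  calc |((x + y) j : ℝ)| ^ (1 / α) ≤ (|(x j : ℝ)| + |(y j : ℝ)|) ^ (1 / α) := by
        gcongr
        simpa using abs_add_le (x j : ℝ) (y j)
    _ ≤ _ := Real.rpow_add_le_add_rpow (abs_nonneg _) (abs_nonneg _) (by positivity) hp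

lemma exp_neg_mul_adist_le_one {κ α : ℝ} (hκ : 0 ≤ κ) {m : ℕ} (x : Fin m → ℤ) :
    Real.exp (-(κ * adist α x)) ≤ 1 :=
  Real.exp_le_one_iff.mpr (neg_nonpos.mpr (mul_nonneg hκ (adist_nonneg α x)))

lemma exp_neg_mul_adist_sub_mul_le {κ α : ℝ} (hκ : 0 ≤ κ) (hα : 1 ≤ α) {m : ℕ}
    (x y z : Fin m → ℤ) :
    Real.exp (-(κ * adist α (x - z))) * Real.exp (-(κ * adist α (z - y))) ≤
      Real.exp (-(κ * adist α (x - y))) := by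
  rw [← Real.exp_add, Real.exp_le_exp, ← neg_add, neg_le_neg_iff, ← mul_add]
  gcongr
  simpa using adist_add_le hα (x - z) (z - y)

lemma card_le_two_mul_pow_of_abs_lt {m N : ℕ} (E : Finset (Fin m → ℤ))
    (hE : ∀ x ∈ E, ∀ j, |x j| < (N : ℤ)) : E.card ≤ (2 * N) ^ m := by
  have hsub : E ⊆ Fintype.piFinset fun _ ↦ Finset.Ico (-(N : ℤ)) N := fun x hx ↦
    Fintype.mem_piFinset.mpr fun j ↦ Finset.mem_Ico.mpr
      ⟨(neg_lt_of_abs_lt (hE x hx j)).le, lt_of_abs_lt (hE x hx j)⟩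
  refine (Finset.card_le_card hsub).trans_eq ?_
  simp only [Fintype.card_piFinset, Int.card_Ico, Finset.prod_const, Finset.card_univ,
    Fintype.card_fin]
  congr
  omega

theorem neumann_inverse_diag_dominant_general {m N : ℕ}
    {α L K B ε : ℝ} (hα : 1 < α) (hL : 0 < L) (hK : 0 < K) (hB : 0 < B) (hε : 0 < ε)
    (E : Finset (Fin m → ℤ)) (hE : ∀ x ∈ E, ∀ j, |x j| < (N : ℤ))
    (D : E → ℂ) (hD : ∀ x : E, 1 / B ≤ ‖D x‖)
    (S : Matrix E E ℂ)
    (hS : ∀ x x' : E,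
      ‖S x x'‖ ≤ K * Real.exp (-(α * L * adist α ((x : Fin m → ℤ) - (x' : Fin m → ℤ)))))
    (hsmall : ε * K * B * (2 * (N : ℝ)) ^ m ≤ 1 / 2) :
    IsUnit (Matrix.diagonal D - (ε : ℂ) • S) ∧
      opNorm (Matrix.diagonal D - (ε : ℂ) • S)⁻¹ ≤ 2 * B ∧
      ∀ x x' : E, x ≠ x' →
        ‖(Matrix.diagonal D - (ε : ℂ) • S)⁻¹ x x'‖ ≤
          2 * ε * K * B ^ 2 *
            Real.exp (-(α * L * adist α ((x : Fin m → ℤ) - (x' : Fin m → ℤ)))) := by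
  have hκ : 0 ≤ α * L := by positivity
  have hcard : (Fintype.card E : ℝ) ≤ (2 * N) ^ m := by
    rw [Fintype.card_coe]
    exact_mod_cast card_le_two_mul_pow_of_abs_lt E hE
  have hεS : ∀ x x' : E, ‖((ε : ℂ) • S) x x'‖ ≤
      ε * K * Real.exp (-(α * L * adist α ((x : Fin m → ℤ) - (x' : Fin m → ℤ)))) := by
    intro x x'
    rw [Matrix.smul_apply, norm_smul, Complex.norm_real, Real.norm_of_nonneg hε.le, mul_assoc]
    exact mul_le_mul_of_nonneg_left (hS x x') hε.le
  obtain ⟨hunit, hnorm, hentry⟩ := Matrix.isUnit_diagonal_sub_and_norm_inv_le hB (by positivity) hD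
    (fun _ _ ↦ (Real.exp_pos _).le) (fun _ _ ↦ exp_neg_mul_adist_le_one hκ _)
    (fun x y z ↦ exp_neg_mul_adist_sub_mul_le hκ hα.le (x : Fin m → ℤ) y z) hεS
    (calc B * (ε * K) * Fintype.card E ≤ B * (ε * K) * (2 * N) ^ m := by gcongr
      _ = ε * K * B * (2 * N) ^ m := by ring
      _ ≤ 1 / 2 := hsmall)
  exact ⟨hunit, hnorm, fun x x' hne ↦ (hentry x x' hne).trans_eq (by ring)⟩

/-- Neumann-series inversion of a diagonally dominant matrix with
sub-exponentially decaying off-diagonal perturbation. -/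
theorem neumann_inverse_diag_dominant {m N : ℕ} (hm : 1 ≤ m) (hN : 1 ≤ N)
    {α L K B ε : ℝ} (hα : 1 < α) (hL : 0 < L) (hK : 0 < K) (hB : 0 < B) (hε : 0 < ε)
    (E : Finset (Fin m → ℤ)) (hE : ∀ x ∈ E, ∀ j, |x j| < (N : ℤ))
    (D : E → ℂ) (hD : ∀ x : E, 1 / B ≤ ‖D x‖)
    (S : Matrix E E ℂ)
    (hS : ∀ x x' : E,
      ‖S x x'‖ ≤ K * Real.exp (-(α * L * adist α ((x : Fin m → ℤ) - (x' : Fin m → ℤ)))))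
    (hsmall : ε * K * B * (2 * (N : ℝ)) ^ m ≤ 1 / 2) :
    IsUnit (Matrix.diagonal D - (ε : ℂ) • S) ∧
      opNorm (Matrix.diagonal D - (ε : ℂ) • S)⁻¹ ≤ 2 * B ∧
      ∀ x x' : E, x ≠ x' →
        ‖(Matrix.diagonal D - (ε : ℂ) • S)⁻¹ x x'‖ ≤
          2 * ε * K * B ^ 2 *
            Real.exp (-(α * L * adist α ((x : Fin m → ℤ) - (x' : Fin m → ℤ)))) :=
  neumann_inverse_diag_dominant_general hα hL hK hB hε E hE D hD S hS hsmall
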